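/- If a word Λ in the alphabet {0, 1, y, y⁻¹} contains no potential cancellations, then advancing any single occurrence of y or y⁻¹ (via the rules y00→0y, y01→10y⁻¹, y1→11y, y⁻¹0→00y⁻¹, y⁻¹10→01y, y⁻¹11→1y⁻¹) results in a word with no potential cancellations. -/

import Mathlib

/-!
Repeatedly advancing a `y±` moves it to the right over bits only and leaves bits behind, so in
a word without cancellations a potential cancellation appears to the right of where the run
stops. Advancing the `i`-th `y±` therefore does not affect later occurrences, which see the
same suffix, and the `i`-th one just continues its own run. An earlier occurrence may now run
on into the bits `br` emitted by the rule `s :: bl → br ++ [s']`; it reaches them either as `s`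
(otherwise it would already cancel with `s`) or stuck on a single bit, and a check of the six
rules shows that it then crosses `br` ending as `s'`, so it cannot cancel with `s'`.
-/

/-- The alphabet {0, 1, y, y⁻¹}. -/
inductive YSym : Type
  | b0 : YSym
  | b1 : YSym
  | yp : YSym
  | ym : YSym
deriving DecidableEq

/-- Whether a symbol is y or y⁻¹. -/
def isY : YSym → Bool
  | YSym.yp => true
  | YSym.ym => true
  | _ => false

/-- The six advancement rules: y00→0y, y01→10y⁻¹, y1→11y,
y⁻¹0→00y⁻¹, y⁻¹10→01y, y⁻¹11→1y⁻¹. -/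
inductive Rule : List YSym → List YSym → Prop
  | r1 : Rule [YSym.yp, YSym.b0, YSym.b0] [YSym.b0, YSym.yp]
  | r2 : Rule [YSym.yp, YSym.b0, YSym.b1] [YSym.b1, YSym.b0, YSym.ym]
  | r3 : Rule [YSym.yp, YSym.b1] [YSym.b1, YSym.b1, YSym.yp]
  | r4 : Rule [YSym.ym, YSym.b0] [YSym.b0, YSym.b0, YSym.ym]
  | r5 : Rule [YSym.ym, YSym.b1, YSym.b0] [YSym.b0, YSym.b1, YSym.yp]
  | r6 : Rule [YSym.ym, YSym.b1, YSym.b1] [YSym.b1, YSym.ym]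

/-- Advancing the i-th occurrence of y or y⁻¹ in a word (occurrences counted from 0;
the rules preserve the number and order of occurrences of y±, so occurrences can be
tracked through rewrites by their index). -/
def AdvanceAt (i : ℕ) (w w' : List YSym) : Prop :=
  ∃ u l r v, Rule l r ∧ w = u ++ l ++ v ∧ w' = u ++ r ++ v ∧ u.countP (fun a => isY a) = i

/-- The word contains an adjacent pair y y⁻¹ or y⁻¹ y. -/
def HasCancel (w : List YSym) : Prop :=
  ∃ u v, w = u ++ [YSym.yp, YSym.ym] ++ v ∨ w = u ++ [YSym.ym, YSym.yp] ++ v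

/-- The i-th occurrence of y± in w is a potential cancellation: repeatedly advancing
that occurrence eventually yields an adjacent yy⁻¹ or y⁻¹y. -/
def PotentialCancellation (i : ℕ) (w : List YSym) : Prop :=
  ∃ w', Relation.ReflTransGen (AdvanceAt i) w w' ∧ HasCancel w'

open YSym

section Lists

variable {α : Type*} {p : α → Bool} {a b : α} {E F E' F' P Q : List α}

theorem exists_eq_append_of_countP_le (ha : p a) (h : E ++ a :: F = P ++ Q)
    (hle : P.countP p ≤ E.countP p) : ∃ V, E = P ++ V ∧ Q = V ++ a :: F := by
  rcases List.append_eq_append_iff.mp h with ⟨_ | ⟨x, V⟩, rfl, hQ⟩ | ⟨V, hE, hQ⟩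
  · exact ⟨[], by simp, by simpa using hQ.symm⟩
  · obtain ⟨rfl, -⟩ := List.cons.inj hQ
    simp [ha] at hle
  · exact ⟨V, hE, hQ⟩

theorem exists_eq_cons_append_of_countP_lt (h : E ++ a :: F = P ++ Q)
    (hlt : E.countP p < P.countP p) : ∃ G, P = E ++ a :: G ∧ F = G ++ Q := by
  rcases List.append_eq_append_iff.mp h with ⟨_ | ⟨x, G⟩, rfl, hQ⟩ | ⟨V, rfl, -⟩
  · simp at hlt
  · obtain ⟨rfl, rfl⟩ := List.cons.inj hQ
    exact ⟨G, rfl, rfl⟩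
  · simp at hlt

theorem eq_of_append_cons_eq_append_cons (ha : p a) (hb : p b)
    (h : E ++ a :: F = E' ++ b :: F') (hc : E.countP p = E'.countP p) :
    E = E' ∧ a = b ∧ F = F' := by
  obtain ⟨_ | ⟨x, V⟩, rfl, hV⟩ := exists_eq_append_of_countP_le ha h hc.ge
  · obtain ⟨rfl, rfl⟩ := List.cons.inj hV
    simp
  · obtain ⟨rfl, -⟩ := List.cons.inj hV
    simp [hb] at hc

end Lists

def yCount (L : List YSym) : ℕ := L.countP (fun a => isY a)

@[simp]
theorem yCount_append (A B : List YSym) : yCount (A ++ B) = yCount A + yCount B :=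
  List.countP_append ..

def IsBits (L : List YSym) : Prop := ∀ x ∈ L, isY x = false

theorem isBits_append {A B : List YSym} : IsBits (A ++ B) ↔ IsBits A ∧ IsBits B :=
  List.forall_mem_append

theorem IsBits.yCount_eq_zero {L : List YSym} (h : IsBits L) : yCount L = 0 :=
  List.countP_eq_zero.mpr fun x hx => by simp [h x hx]

def Cancels (a b : YSym) : Prop := (a = yp ∧ b = ym) ∨ (a = ym ∧ b = yp)

theorem Cancels.isY {a b : YSym} (h : Cancels a b) : isY a = true ∧ isY b = true := by
  rcases h with ⟨rfl, rfl⟩ | ⟨rfl, rfl⟩ <;> exact ⟨rfl, rfl⟩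

theorem Cancels.ne {a b : YSym} (h : Cancels a b) : a ≠ b := by
  rcases h with ⟨rfl, rfl⟩ | ⟨rfl, rfl⟩ <;> simp

theorem eq_of_not_cancels {a b : YSym} (ha : isY a = true) (hb : isY b = true)
    (h : ¬ Cancels a b) : a = b := by
  cases a <;> cases b <;> simp_all [isY, Cancels]

section HasCancel

variable {A B D L L₁ L₂ : List YSym} {a b : YSym}

theorem not_hasCancel_iff_isChain : ¬ HasCancel L ↔ L.IsChain (fun a b => ¬ Cancels a b) := by
  rw [List.isChain_iff_forall_rel_of_append_cons_cons]
  constructor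
  · rintro h a b l₁ l₂ rfl (⟨rfl, rfl⟩ | ⟨rfl, rfl⟩)
    · exact h ⟨l₁, l₂, Or.inl (by simp)⟩
    · exact h ⟨l₁, l₂, Or.inr (by simp)⟩
  · rintro h ⟨u, v, hL | hL⟩
    · exact h (by simpa using hL) (Or.inl ⟨rfl, rfl⟩)
    · exact h (by simpa using hL) (Or.inr ⟨rfl, rfl⟩)

theorem HasCancel.mono (h : HasCancel L₁) (hL : L₁ <:+: L₂) : HasCancel L₂ := by
  by_contra h₂
  exact not_hasCancel_iff_isChain.mpr ((not_hasCancel_iff_isChain.mp h₂).infix hL) h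

theorem hasCancel_cons_cons : HasCancel (a :: b :: L) ↔ Cancels a b ∨ HasCancel (b :: L) := by
  rw [← not_iff_not, not_or, not_hasCancel_iff_isChain, not_hasCancel_iff_isChain,
    List.isChain_cons_cons]

theorem not_hasCancel_singleton (a : YSym) : ¬ HasCancel [a] :=
  not_hasCancel_iff_isChain.mpr (List.isChain_singleton a)

theorem HasCancel.of_append_bits (hD : IsBits D) (hD₀ : D ≠ []) (h : HasCancel (A ++ D ++ B)) :
    HasCancel A ∨ HasCancel B := by
  by_contra! hAB
  rw [not_hasCancel_iff_isChain, not_hasCancel_iff_isChain] at hAB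
  refine not_hasCancel_iff_isChain.mpr ?_ h
  have hl : ∀ x ∈ D, ∀ y, ¬ Cancels x y := fun x hx y hxy => by
    simpa [hD x hx] using hxy.isY.1
  have hr : ∀ x ∈ D, ∀ y, ¬ Cancels y x := fun x hx y hxy => by
    simpa [hD x hx] using hxy.isY.2
  rw [List.append_assoc]
  refine hAB.1.append (List.IsChain.append ?_ hAB.2 ?_) ?_
  · exact List.isChain_iff_forall_rel_of_append_cons_cons.mpr fun x y l₁ l₂ h =>
      hl x (by simp [h]) y
  · exact fun x hx y _ => hl x (List.mem_of_mem_getLast? hx) y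
  · rw [List.head?_append_of_ne_nil _ hD₀]
    exact fun x _ y hy => hr y (List.mem_of_mem_head? hy) x

end HasCancel

/-- No rule applies to `ρ :: (B ++ x :: _)` when `x` is `y` or `y⁻¹`. -/
def Stuck (ρ : YSym) (B : List YSym) : Prop :=
  B = [] ∨ (ρ = yp ∧ B = [b0]) ∨ (ρ = ym ∧ B = [b1])

def signAfter : YSym → List YSym → Option YSym
  | σ, [] => some σ
  | yp, b0 :: b0 :: C => signAfter yp C
  | yp, b0 :: b1 :: C => signAfter ym C
  | yp, b1 :: C => signAfter yp C
  | ym, b0 :: C => signAfter ym C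
  | ym, b1 :: b0 :: C => signAfter yp C
  | ym, b1 :: b1 :: C => signAfter ym C
  | _, _ => none

namespace Rule

theorem exists_cons_append {l r : List YSym} (h : Rule l r) :
    ∃ σ c d ρ, l = σ :: c ∧ r = d ++ [ρ] := by
  cases h <;> exact ⟨_, _, _, _, rfl, (List.dropLast_append_getLast (by simp)).symm⟩

theorem yCount_left {l r : List YSym} (h : Rule l r) : yCount l = 1 := by
  cases h <;> rfl

theorem yCount_right {l r : List YSym} (h : Rule l r) : yCount r = 1 := by
  cases h <;> rfl

variable {σ ρ : YSym} {c d : List YSym}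

theorem eq_of_cons_append (h : Rule (σ :: c) (d ++ [ρ])) :
    σ = yp ∧ c = [b0, b0] ∧ d = [b0] ∧ ρ = yp ∨
    σ = yp ∧ c = [b0, b1] ∧ d = [b1, b0] ∧ ρ = ym ∨
    σ = yp ∧ c = [b1] ∧ d = [b1, b1] ∧ ρ = yp ∨
    σ = ym ∧ c = [b0] ∧ d = [b0, b0] ∧ ρ = ym ∨
    σ = ym ∧ c = [b1, b0] ∧ d = [b0, b1] ∧ ρ = yp ∨
    σ = ym ∧ c = [b1, b1] ∧ d = [b1] ∧ ρ = ym := by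
  generalize hl : σ :: c = l at h
  generalize hr : d ++ [ρ] = r at h
  cases h <;>
  · obtain ⟨rfl, rfl⟩ := List.cons.inj hl
    obtain ⟨rfl, hρ⟩ :=
      List.append_inj' (hr.trans (List.dropLast_append_getLast (by simp)).symm) rfl
    simp_all

theorem isY_left (h : Rule (σ :: c) (d ++ [ρ])) : isY σ = true := by
  rcases h.eq_of_cons_append with h | h | h | h | h | h <;> simp [h.1, isY]

theorem isY_right (h : Rule (σ :: c) (d ++ [ρ])) : isY ρ = true := by
  rcases h.eq_of_cons_append with h | h | h | h | h | h <;> simp [h.2.2.2, isY]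

theorem isBits_left (h : Rule (σ :: c) (d ++ [ρ])) : IsBits c := by
  rcases h.eq_of_cons_append with h | h | h | h | h | h <;> simp [h.2.1, IsBits, isY]

theorem isBits_right (h : Rule (σ :: c) (d ++ [ρ])) : IsBits d := by
  rcases h.eq_of_cons_append with h | h | h | h | h | h <;> simp [h.2.2.1, IsBits, isY]

theorem right_ne_nil (h : Rule (σ :: c) (d ++ [ρ])) : d ≠ [] := by
  rcases h.eq_of_cons_append with h | h | h | h | h | h <;> simp [h.2.2.1]

theorem stuck_of_eq_append {G c' : List YSym} (h : Rule (σ :: c) (d ++ [ρ]))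
    (hc : c = G ++ c') (hc' : c' ≠ []) : Stuck σ G := by
  rcases h.eq_of_cons_append with h | h | h | h | h | h <;>
  · obtain ⟨rfl, rfl, -⟩ := h
    rcases G with _ | ⟨x, _ | ⟨y, G⟩⟩ <;> simp_all [Stuck]

theorem signAfter_append (h : Rule (σ :: c) (d ++ [ρ])) (C : List YSym) :
    signAfter σ (c ++ C) = signAfter ρ C := by
  rcases h.eq_of_cons_append with h | h | h | h | h | h <;>
  · obtain ⟨rfl, rfl, -, rfl⟩ := h
    simp [signAfter]

end Rule

/-- `Run σ C e τ`: advancing `σ` repeatedly consumes exactly the bits `C` on its right,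
leaves the bits `e` behind and ends as `τ`. -/
inductive Run : YSym → List YSym → List YSym → YSym → Prop
  | nil (σ : YSym) : Run σ [] [] σ
  | cons {σ ρ τ : YSym} {c d C e : List YSym} :
      Rule (σ :: c) (d ++ [ρ]) → Run ρ C e τ → Run σ (c ++ C) (d ++ e) τ

namespace Run

variable {σ τ : YSym} {C e : List YSym}

theorem isBits (h : Run σ C e τ) : IsBits C ∧ IsBits e := by
  induction h with
  | nil => simp [IsBits]
  | cons hr _ ih =>
    exact ⟨isBits_append.mpr ⟨hr.isBits_left, ih.1⟩, isBits_append.mpr ⟨hr.isBits_right, ih.2⟩⟩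

theorem isY (h : Run σ C e τ) (hσ : isY σ = true) : isY τ = true := by
  induction h with
  | nil => exact hσ
  | cons hr _ ih => exact ih hr.isY_right

theorem eq_nil_of_emitted_eq_nil (h : Run σ C e τ) (he : e = []) : C = [] ∧ τ = σ := by
  cases h with
  | nil => simp
  | cons hr _ => simp [hr.right_ne_nil] at he

theorem signAfter_eq (h : Run σ C e τ) : signAfter σ C = some τ := by
  induction h with
  | nil σ => cases σ <;> rfl
  | cons hr _ ih => rw [hr.signAfter_append, ih]

theorem exists_split_stuck {G B : List YSym} (h : Run σ (G ++ B) e τ) :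
    ∃ G₁ G₂ e₁ ρ e₂, G = G₁ ++ G₂ ∧ Stuck ρ G₂ ∧ Run σ G₁ e₁ ρ ∧ Run ρ (G₂ ++ B) e₂ τ ∧
      e = e₁ ++ e₂ := by
  generalize hC : G ++ B = C at h
  induction h generalizing G with
  | nil σ =>
    obtain ⟨rfl, rfl⟩ := List.append_eq_nil_iff.mp hC
    exact ⟨[], [], [], σ, [], rfl, Or.inl rfl, .nil σ, .nil σ, rfl⟩
  | @cons σ ρ τ c d C e hr hrun ih =>
    rcases List.append_eq_append_iff.mp hC with ⟨_ | ⟨x, c'⟩, hc, rfl⟩ | ⟨G', rfl, hC'⟩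
    · refine ⟨G, [], d, ρ, e, by simp, Or.inl rfl, ?_, by simpa using hrun, rfl⟩
      simpa [hc] using Run.cons hr (.nil ρ)
    · refine ⟨[], G, [], σ, d ++ e, by simp, hr.stuck_of_eq_append hc (by simp), .nil σ, ?_, rfl⟩
      simpa [hc] using Run.cons hr hrun
    · obtain ⟨G₁, G₂, e₁, ρ', e₂, rfl, hst, h₁, h₂, rfl⟩ := ih hC'.symm
      exact ⟨c ++ G₁, G₂, d ++ e₁, ρ', e₂, by simp, hst, h₁.cons hr, h₂, by simp⟩

end Run

theorem Rule.sign_of_stuck {s s' ρ τ : YSym} {bl br B e : List YSym}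
    (hr : Rule (s :: bl) (br ++ [s'])) (hB : Stuck ρ B) (hρ : B = [] → ρ = s)
    (h : Run ρ (B ++ br) e τ) : τ = s' := by
  have := h.signAfter_eq
  rcases hr.eq_of_cons_append with hr | hr | hr | hr | hr | hr <;>
  · obtain ⟨rfl, rfl, rfl, rfl⟩ := hr
    rcases hB with rfl | ⟨rfl, rfl⟩ | ⟨rfl, rfl⟩ <;> simp_all [signAfter]

theorem Rule.sign_of_run {s s' σ τ : YSym} {bl br G e : List YSym}
    (hr : Rule (s :: bl) (br ++ [s'])) (h : Run σ (G ++ br) e τ)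
    (hG : ∀ e₁ ρ, Run σ G e₁ ρ → ρ = s) : τ = s' := by
  obtain ⟨G₁, G₂, e₁, ρ, e₂, rfl, hst, h₁, h₂, -⟩ := h.exists_split_stuck
  exact hr.sign_of_stuck hst (by rintro rfl; exact hG e₁ ρ (by simpa using h₁)) h₂

theorem AdvanceAt.exists_eq_append_cons {j : ℕ} {z z' : List YSym} (h : AdvanceAt j z z') :
    ∃ E σ F, z = E ++ σ :: F ∧ yCount E = j ∧ isY σ = true := by
  obtain ⟨u, l, r, v, hr, rfl, -, hu⟩ := h
  obtain ⟨σ, c, d, ρ, rfl, rfl⟩ := hr.exists_cons_append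
  exact ⟨u, σ, c ++ v, by simp, hu, hr.isY_left⟩

theorem exists_rule_of_advanceAt_append_cons {σ : YSym} {E F z : List YSym} (hσ : isY σ = true)
    (h : AdvanceAt (yCount E) (E ++ σ :: F) z) :
    ∃ c d ρ F₁, Rule (σ :: c) (d ++ [ρ]) ∧ F = c ++ F₁ ∧ z = E ++ d ++ ρ :: F₁ := by
  obtain ⟨u, l, r, v, hr, hz, rfl, hu⟩ := h
  obtain ⟨σ', c, d, ρ, rfl, rfl⟩ := hr.exists_cons_append
  obtain ⟨rfl, rfl, rfl⟩ :=
    eq_of_append_cons_eq_append_cons (F' := c ++ v) hσ hr.isY_left (by simpa using hz) hu.symm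
  exact ⟨c, d, ρ, v, hr, rfl, by simp⟩

theorem exists_run_of_reflTransGen_advanceAt {j : ℕ} {σ : YSym} {E F z : List YSym}
    (hE : yCount E = j) (hσ : isY σ = true)
    (h : Relation.ReflTransGen (AdvanceAt j) (E ++ σ :: F) z) :
    ∃ C e τ F', F = C ++ F' ∧ Run σ C e τ ∧ z = E ++ e ++ τ :: F' := by
  generalize hz₀ : E ++ σ :: F = z₀ at h
  induction h using Relation.ReflTransGen.head_induction_on generalizing E σ F with
  | refl => exact ⟨[], [], σ, F, rfl, .nil σ, by simp [hz₀]⟩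
  | head hstep _ ih =>
    subst hz₀ hE
    obtain ⟨c, d, ρ, F₁, hr, rfl, rfl⟩ := exists_rule_of_advanceAt_append_cons hσ hstep
    obtain ⟨C, e, τ, F', rfl, hrun, rfl⟩ :=
      ih (E := E ++ d) (F := F₁) (by simp [hr.isBits_right.yCount_eq_zero]) hr.isY_right (by simp)
    exact ⟨c ++ C, d ++ e, τ, F', by simp, hrun.cons hr, by simp⟩

theorem Run.reflTransGen_advanceAt {σ τ : YSym} {C e : List YSym} (h : Run σ C e τ)
    (E F : List YSym) :
    Relation.ReflTransGen (AdvanceAt (yCount E)) (E ++ σ :: (C ++ F)) (E ++ e ++ τ :: F) := by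
  induction h generalizing E with
  | nil σ => simp [Relation.ReflTransGen.refl]
  | @cons σ ρ τ c d C e hr _ ih =>
    refine .head (b := E ++ d ++ ρ :: (C ++ F)) ⟨E, σ :: c, d ++ [ρ], C ++ F, hr, by simp,
      by simp, rfl⟩ ?_
    simpa [hr.isBits_right.yCount_eq_zero] using ih (E ++ d)

theorem Run.potentialCancellation {σ τ : YSym} {C e F : List YSym} (h : Run σ C e τ)
    (E : List YSym) (hc : HasCancel (τ :: F)) :
    PotentialCancellation (yCount E) (E ++ σ :: (C ++ F)) :=
  ⟨_, h.reflTransGen_advanceAt E F, hc.mono (List.suffix_append _ _).isInfix⟩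

theorem PotentialCancellation.exists_run {j : ℕ} {z : List YSym}
    (h : PotentialCancellation j z) (hz : ¬ HasCancel z) :
    ∃ E σ C e τ F, z = E ++ σ :: (C ++ F) ∧ yCount E = j ∧ isY σ = true ∧ Run σ C e τ ∧
      HasCancel (τ :: F) := by
  obtain ⟨z'', hchain, hc⟩ := h
  rcases hchain.cases_head with rfl | ⟨z₁, hstep, -⟩
  · exact absurd hc hz
  obtain ⟨E, σ, F, rfl, hE, hσ⟩ := hstep.exists_eq_append_cons
  obtain ⟨C, e, τ, F', rfl, hrun, rfl⟩ := exists_run_of_reflTransGen_advanceAt hE hσ hchain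
  refine ⟨E, σ, C, e, τ, F', rfl, hE, hσ, hrun, ?_⟩
  rcases eq_or_ne e [] with rfl | he
  · obtain ⟨rfl, rfl⟩ := hrun.eq_nil_of_emitted_eq_nil rfl
    exact absurd (by simpa using hc) hz
  · rcases hc.of_append_bits hrun.isBits.2 he with hE' | hF
    · exact absurd (hE'.mono (List.prefix_append _ _).isInfix) hz
    · exact hF

theorem not_potentialCancellation_of_prefix {j : ℕ} {P P' v : List YSym}
    (hP : yCount P = yCount P') (hj : yCount P' ≤ j)
    (hw : ¬ PotentialCancellation j (P ++ v)) (hw' : ¬ HasCancel (P' ++ v)) :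
    ¬ PotentialCancellation j (P' ++ v) := by
  intro hpc
  obtain ⟨E, σ, C, e, τ, F, heq, rfl, hσ, hrun, hc⟩ := hpc.exists_run hw'
  obtain ⟨V, rfl, rfl⟩ := exists_eq_append_of_countP_le hσ heq.symm hj
  have hcount : yCount (P ++ V) = yCount (P' ++ V) := by simp [hP]
  exact hw (by simpa [hcount] using hrun.potentialCancellation (P ++ V) hc)

theorem not_potentialCancellation_of_lt {j : ℕ} {s s' : YSym} {u v bl br : List YSym}
    (hr : Rule (s :: bl) (br ++ [s'])) (hj : j < yCount u)
    (hw : ¬ PotentialCancellation j (u ++ s :: bl ++ v))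
    (hw' : ¬ HasCancel (u ++ (br ++ [s']) ++ v)) :
    ¬ PotentialCancellation j (u ++ (br ++ [s']) ++ v) := by
  intro hpc
  have hv : ¬ HasCancel (s' :: v) := fun h => hw' (h.mono ⟨u ++ br, [], by simp⟩)
  obtain ⟨E, σ, C, e, τ, F, heq, rfl, hσ, hrun, hc⟩ := hpc.exists_run hw'
  obtain ⟨G, rfl, hG⟩ :=
    exists_eq_cons_append_of_countP_lt (Q := br ++ s' :: v) (by simpa using heq.symm) hj
  obtain ⟨X, hGX, rfl⟩ := exists_eq_append_of_countP_le (E := G ++ br) hr.isY_right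
    (by simpa using hG.symm) (hrun.isBits.1.yCount_eq_zero.trans_le (Nat.zero_le _))
  have hrest : ∀ {C₀ D e₀ ρ}, G = C₀ ++ D → Run σ C₀ e₀ ρ →
      ¬ HasCancel (ρ :: (D ++ s :: (bl ++ v))) := by
    rintro C₀ D e₀ ρ rfl h₀ hc₀
    exact hw (by simpa using h₀.potentialCancellation E hc₀)
  rcases List.append_eq_append_iff.mp hGX with ⟨C₂, rfl, hbr⟩ | ⟨D, rfl, rfl⟩
  -- the run crosses all of `G` and the part `C₂` of `br`
  · rcases eq_or_ne X [] with rfl | hX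
    · have hτ : τ = s' := hr.sign_of_run (by simpa [hbr] using hrun) fun e₀ ρ h₀ =>
        eq_of_not_cancels (h₀.isY hσ) hr.isY_left fun hρs =>
          hrest (D := []) (by simp) h₀ (hasCancel_cons_cons.mpr (Or.inl hρs))
      rcases hasCancel_cons_cons.mp (by simpa using hc) with hτs | hs'
      · exact hτs.ne hτ
      · exact hv hs'
    · have hXbits := hr.isBits_right
      rw [hbr, isBits_append] at hXbits
      rcases (show HasCancel ([τ] ++ X ++ s' :: v) by simpa using hc).of_append_bits
        hXbits.2 hX with h | h
      · exact not_hasCancel_singleton τ h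
      · exact hv h
  -- the run stops inside `G`
  · rcases (show HasCancel ((τ :: D) ++ br ++ s' :: v) by simpa using hc).of_append_bits
      hr.isBits_right hr.right_ne_nil with h | h
    · exact hrest rfl hrun (h.mono (List.prefix_append _ _).isInfix)
    · exact hv h

/-- advancing any single occurrence of y± in a word with no potential
cancellations results in a word with no potential cancellations. -/
theorem advance_preserves_no_potential_cancellation
    (w w' : List YSym) (i : ℕ)
    (hw : ∀ j, ¬ PotentialCancellation j w)
    (hstep : AdvanceAt i w w') :
    ∀ j, ¬ PotentialCancellation j w' := by
  intro j hj
  have hw' : ¬ HasCancel w' := fun h => hw i ⟨w', .single hstep, h⟩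
  rcases lt_trichotomy j i with hji | rfl | hij
  · obtain ⟨u, l, r, v, hr, rfl, rfl, hu⟩ := hstep
    obtain ⟨s, bl, br, s', rfl, rfl⟩ := hr.exists_cons_append
    exact not_potentialCancellation_of_lt hr (hji.trans_eq hu.symm) (hw j) hw' hj
  · obtain ⟨w'', hchain, hc⟩ := hj
    exact hw j ⟨w'', .head hstep hchain, hc⟩
  · obtain ⟨u, l, r, v, hr, rfl, rfl, hu⟩ := hstep
    have hu : yCount u = i := hu
    exact not_potentialCancellation_of_prefix (by simp [hr.yCount_left, hr.yCount_right])
      (by simp [hu, hr.yCount_right]; omega) (hw j) hw' hj
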